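/- arXiv:2210.05537 — 2 statements merged into one kernel-verified Lean document; each statement's English description precedes it below -/
import Mathlib

section
/- Fix k ≥ 2 and let u, t be types in 𝒯_k. If the generating series C_u is aperiodic and ∂F_t/∂C_u ≠ 0 (i.e. there is an edge u → t in the dependency graph G_k), then C_t is aperiodic. -/
open FirstOrder Filter Asymptotics Topology

namespace Av231

/-- Relation symbols of the theory of two orders: two binary relations `<_P` and `<_V`. -/
inductive TwoRel : ℕ → Type
  | lp : TwoRel 2
  | lv : TwoRel 2

/-- The first-order language with two binary relation symbols `<_P` and `<_V`. -/
def L : Language := ⟨fun _ => Empty, TwoRel⟩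

/-- The `L`-structure on `Fin n` associated with a permutation `σ` of `{1,…,n}`:
`i <_P j` iff `i < j` and `i <_V j` iff `σ i < σ j`. -/
def pStruct {n : ℕ} (σ : Equiv.Perm (Fin n)) : L.Structure (Fin n) where
  funMap := fun f _ => nomatch f
  RelMap := fun r x =>
    match r with
    | .lp => x 0 < x 1
    | .lv => σ (x 0) < σ (x 1)

/-- A permutation satisfies a first-order sentence. -/
def Sat {n : ℕ} (σ : Equiv.Perm (Fin n)) (ψ : L.Sentence) : Prop :=
  @Language.Sentence.Realize L (Fin n) (pStruct σ) ψ

/-- The quantifier depth of a first-order formula. -/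
def qd {L' : Language} {α : Type*} : ∀ {n : ℕ}, L'.BoundedFormula α n → ℕ
  | _, .falsum => 0
  | _, .equal _ _ => 0
  | _, .rel _ _ => 0
  | _, .imp f g => max (qd f) (qd g)
  | _, .all f => qd f + 1

/-- A permutation avoids the pattern `231`. -/
def Avoids {n : ℕ} (σ : Equiv.Perm (Fin n)) : Prop :=
  ¬ ∃ i j k : Fin n, i < j ∧ j < k ∧ σ k < σ i ∧ σ i < σ j

/-- The number of `231`-avoiding permutations of size `n` satisfying `ψ`. -/
noncomputable def avN (n : ℕ) (ψ : L.Sentence) : ℕ :=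
  Nat.card {σ : Equiv.Perm (Fin n) // Avoids σ ∧ Sat σ ψ}

/-- The probability that a uniform random `231`-avoiding permutation of size `n`
satisfies `ψ` (the number of `231`-avoiding permutations of size `n` is `catalan n`). -/
noncomputable def prob (n : ℕ) (ψ : L.Sentence) : ℝ :=
  (avN n ψ : ℝ) / (catalan n : ℝ)

/-- Permutations of arbitrary finite size. -/
abbrev FinPerm := Σ n : ℕ, Equiv.Perm (Fin n)

def AvoidsF (p : FinPerm) : Prop := Avoids p.2

/-- Direct sum of permutations. -/
def dsum {a b : ℕ} (σ : Equiv.Perm (Fin a)) (τ : Equiv.Perm (Fin b)) :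
    Equiv.Perm (Fin (a + b)) :=
  finSumFinEquiv.permCongr (Equiv.sumCongr σ τ)

/-- Skew sum of permutations. -/
def ssum {a b : ℕ} (σ : Equiv.Perm (Fin a)) (τ : Equiv.Perm (Fin b)) :
    Equiv.Perm (Fin (a + b)) :=
  finSumFinEquiv.symm.trans ((Equiv.sumCongr σ τ).trans
    ((Equiv.sumComm (Fin a) (Fin b)).trans (finSumFinEquiv.trans (finCongr (Nat.add_comm b a)))))

/-- The operation `(τ, π) ↦ τ ⊕ (1 ⊖ π)` on permutations of arbitrary sizes. -/
def glue (τ π : FinPerm) : FinPerm :=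
  ⟨τ.1 + (1 + π.1), dsum τ.2 (ssum (1 : Equiv.Perm (Fin 1)) π.2)⟩

/-- Two permutations are `k`-equivalent when they satisfy the same first-order sentences
of quantifier depth at most `k`. -/
def kEquiv (k : ℕ) (p q : FinPerm) : Prop :=
  ∀ ψ : L.Sentence, qd ψ ≤ k → (Sat p.2 ψ ↔ Sat q.2 ψ)

end Av231

/-- `k`-equivalence as a setoid on finite permutations. -/
def kSetoid (k : ℕ) : Setoid Av231.FinPerm :=
  ⟨Av231.kEquiv k,
    ⟨fun _ _ _ => Iff.rfl, fun h ψ hψ => (h ψ hψ).symm,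
      fun h h' ψ hψ => (h ψ hψ).trans (h' ψ hψ)⟩⟩

namespace Av231

/-- Logical types of order `k`: equivalence classes of `≡ₖ`. -/
def QT (k : ℕ) := Quotient (kSetoid k)

/-- The logical type of order `k` of a permutation. -/
def typeOf (k : ℕ) (p : FinPerm) : QT k := Quotient.mk (kSetoid k) p

/-- A type is realized when some `231`-avoiding permutation has this type;
`𝒯ₖ` consists of the realized types. -/
def Realized (k : ℕ) (t : QT k) : Prop := ∃ p : FinPerm, AvoidsF p ∧ typeOf k p = t

/-- The number of `231`-avoiding permutations of size `n` whose logical type of order `k`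
is `t`, i.e. the `n`-th coefficient of the generating series `C_t`. -/
noncomputable def cnt (k : ℕ) (t : QT k) (n : ℕ) : ℕ :=
  Nat.card {σ : Equiv.Perm (Fin n) // Avoids σ ∧ typeOf k ⟨n, σ⟩ = t}

/-- The type of the empty permutation. -/
def emptyType (k : ℕ) : QT k := typeOf k ⟨0, 1⟩

/-- `H_k(t₁,t₂)`: the type of `τ ⊕ (1 ⊖ π)` where `τ, π` are representatives
of `t₁, t₂` respectively. -/
noncomputable def Hfun (k : ℕ) (t₁ t₂ : QT k) : QT k :=
  typeOf k (glue (Quotient.out t₁) (Quotient.out t₂))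

/-- The edge relation `u → t` of the dependency graph `G_k`:
`∂F_t/∂C_u ≠ 0`, i.e. some `v ∈ 𝒯ₖ` satisfies `H_k(u,v) = t` or `H_k(v,u) = t`. -/
def Edge (k : ℕ) (u t : QT k) : Prop :=
  ∃ v : QT k, Realized k v ∧ (Hfun k u v = t ∨ Hfun k v u = t)

/-- The set `𝒯ₖ` of types realized by `231`-avoiding permutations, as a type. -/
def Tk (k : ℕ) := {t : QT k // Realized k t}

/-- The edge relation of `G_k` restricted to `𝒯ₖ`. -/
def EdgeT (k : ℕ) (u t : Tk k) : Prop := Edge k u.1 t.1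

/-- `S` is a terminal strongly connected component of the dependency graph `G_k`:
it is nonempty, any vertex of `S` reaches any other, and no edge leaves `S`
(this forces maximality, hence being an SCC). -/
def IsTermSCC (k : ℕ) (S : Set (Tk k)) : Prop :=
  S.Nonempty ∧ (∀ u ∈ S, ∀ v ∈ S, Relation.ReflTransGen (EdgeT k) u v) ∧
    (∀ u ∈ S, ∀ v : Tk k, EdgeT k u v → v ∈ S)

/-- A sequence of coefficients is periodic when, for some `d ≥ 2` and `r`,
it vanishes outside `dℤ + r`. -/
def SeqPeriodic (a : ℕ → ℝ) : Prop :=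
  ∃ d : ℕ, 2 ≤ d ∧ ∃ r : ℕ, ∀ n : ℕ, n % d ≠ r % d → a n = 0

/-- The generating series `C_t` of `231`-avoiding permutations of type `t`,
evaluated at a complex number `z`. -/
noncomputable def Ct (k : ℕ) (t : QT k) (z : ℂ) : ℂ :=
  ∑' n : ℕ, (cnt k t n : ℂ) * z ^ n

/-- The Catalan generating function. -/
noncomputable def catGF (z : ℂ) : ℂ := ∑' n : ℕ, (catalan n : ℂ) * z ^ n

/-- The entry `M_k(z)_{t,u} = ∂F_t/∂C_u (z; C_v(z), v ∈ 𝒯ₖ)` of the Jacobian matrix of the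
type-refined system. -/
noncomputable def Mmat (k : ℕ) (z : ℂ) (t u : QT k) : ℂ :=
  z * ((∑' v : {v : QT k // Realized k v ∧ Hfun k u v = t}, Ct k v.1 z) +
       (∑' v : {v : QT k // Realized k v ∧ Hfun k v u = t}, Ct k v.1 z))

/-- `lam` is an eigenvalue of the (possibly infinite) matrix `A`, witnessed by a finitely
supported eigenvector. For finite index types this is the usual notion of eigenvalue. -/
def IsEig {α : Type*} (A : α → α → ℂ) (lam : ℂ) : Prop :=
  ∃ v : α →₀ ℂ, v ≠ 0 ∧ ∀ x : α, ∑ y ∈ v.support, A x y * v y = lam * v x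



/-!
If `σ` is a 231-avoiding permutation of type `u` and size `n` and `π` one of type `v` and size
`m`, then `σ ⊕ (1 ⊖ π)` is 231-avoiding of size `n + 1 + m` and has type `H_k(u, v)`, because `≡ₖ`
is a congruence for this gluing: by the Ehrenfeucht–Fraïssé theorem (Hintikka formulas give the
harder direction) it suffices that Duplicator can answer a move in either block with her winning
strategy for that block. So along an edge `u → t` the support of `C_u`, shifted by `m + 1`, lies in
the support of `C_t`, and a period of `C_t` is a period of `C_u`.
-/

theorem SeqPeriodic.of_shift {a b : ℕ → ℝ} (c : ℕ) (hb : SeqPeriodic b)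
    (hab : ∀ n, a n ≠ 0 → b (n + c) ≠ 0) : SeqPeriodic a := by
  obtain ⟨d, hd, r, hr⟩ := hb
  refine ⟨d, hd, r + c * (d - 1), fun n hn => ?_⟩
  by_contra han
  have hshift : n + c ≡ r [MOD d] := by_contra fun hne => hab n han (hr _ hne)
  have hcd : n + c + c * (d - 1) = n + c * d := by
    rw [add_assoc, Nat.mul_sub_one, Nat.add_sub_cancel' (Nat.le_mul_of_pos_right c (by omega))]
  refine hn ?_
  calc n % d = (n + c * d) % d := (Nat.add_mul_mod_self_right n c d).symm
    _ = (r + c * (d - 1)) % d := by rw [← hcd]; exact hshift.add_right _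

section EhrenfeuchtFraisse

variable {n n' : ℕ} (σ : Equiv.Perm (Fin n)) (σ' : Equiv.Perm (Fin n'))

/-- Equality of positions is not listed: it is determined by `<` (`IsPartialIso.fst_eq_iff`). -/
def IsPartialIso (S : Set (Fin n × Fin n')) : Prop :=
  ∀ p ∈ S, ∀ q ∈ S, (p.1 < q.1 ↔ p.2 < q.2) ∧ (σ p.1 < σ q.1 ↔ σ' p.2 < σ' q.2)

def DuplicatorWins : ℕ → Set (Fin n × Fin n') → Prop
  | 0, S => IsPartialIso σ σ' S
  | k + 1, S => IsPartialIso σ σ' S ∧ (∀ x, ∃ x', DuplicatorWins k (insert (x, x') S)) ∧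
      ∀ x', ∃ x, DuplicatorWins k (insert (x, x') S)

variable {σ σ'} {S T : Set (Fin n × Fin n')}

theorem IsPartialIso.fst_eq_iff (h : IsPartialIso σ σ' S) {p q : Fin n × Fin n'} (hp : p ∈ S)
    (hq : q ∈ S) : p.1 = q.1 ↔ p.2 = q.2 := by
  simp only [le_antisymm_iff, ← not_lt, (h p hp q hq).1, (h q hq p hp).1]

theorem IsPartialIso.mono (hST : S ⊆ T) (h : IsPartialIso σ σ' T) : IsPartialIso σ σ' S :=
  fun p hp q hq => h p (hST hp) q (hST hq)

theorem DuplicatorWins.isPartialIso {k : ℕ} (h : DuplicatorWins σ σ' k S) :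
    IsPartialIso σ σ' S := by
  cases k with
  | zero => exact h
  | succ k => exact h.1

theorem DuplicatorWins.mono {k : ℕ} (hST : S ⊆ T) (h : DuplicatorWins σ σ' k T) :
    DuplicatorWins σ σ' k S := by
  induction k generalizing S T with
  | zero => exact IsPartialIso.mono hST h
  | succ k ih =>
    refine ⟨h.1.mono hST, fun x => ?_, fun x' => ?_⟩
    · obtain ⟨x', hx⟩ := h.2.1 x
      exact ⟨x', ih (Set.insert_subset_insert hST) hx⟩
    · obtain ⟨x, hx⟩ := h.2.2 x'
      exact ⟨x, ih (Set.insert_subset_insert hST) hx⟩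

theorem DuplicatorWins.of_succ {k : ℕ} (h : DuplicatorWins σ σ' (k + 1) S) :
    DuplicatorWins σ σ' k S := by
  induction k generalizing S with
  | zero => exact h.1
  | succ k ih =>
    exact ⟨h.1, fun x => (h.2.1 x).imp fun _ => ih, fun x' => (h.2.2 x').imp fun _ => ih⟩

theorem duplicatorWins_self (k : ℕ) {S : Set (Fin n × Fin n)} (hS : ∀ p ∈ S, p.1 = p.2) :
    DuplicatorWins σ σ k S := by
  have hiso : ∀ {S : Set (Fin n × Fin n)}, (∀ p ∈ S, p.1 = p.2) → IsPartialIso σ σ S :=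
    fun hS p hp q hq => by rw [hS p hp, hS q hq]; exact ⟨Iff.rfl, Iff.rfl⟩
  induction k generalizing S with
  | zero => exact hiso hS
  | succ k ih =>
    have hS' : ∀ x, ∀ p ∈ insert (x, x) S, p.1 = p.2 := by
      rintro x p (rfl | hp)
      exacts [rfl, hS p hp]
    exact ⟨hiso hS, fun x => ⟨x, ih (hS' x)⟩, fun x => ⟨x, ih (hS' x)⟩⟩

end EhrenfeuchtFraisse

section Realize

open FirstOrder.Language

variable {n n' : ℕ} (σ : Equiv.Perm (Fin n)) (σ' : Equiv.Perm (Fin n'))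

def Holds {m : ℕ} (φ : L.BoundedFormula Empty m) (xs : Fin m → Fin n) : Prop :=
  @BoundedFormula.Realize L (Fin n) (pStruct σ) Empty m φ default xs

variable {σ σ'}

theorem term_eq_var {m : ℕ} (t : L.Term (Empty ⊕ Fin m)) : ∃ i, t = Term.var (Sum.inr i) := by
  rcases t with (e | i) | ⟨f, _⟩
  exacts [e.elim, ⟨i, rfl⟩, (f : Empty).elim]

theorem DuplicatorWins.holds_iff {m : ℕ} (φ : L.BoundedFormula Empty m) {k : ℕ} (hφ : qd φ ≤ k)
    {S : Set (Fin n × Fin n')} (h : DuplicatorWins σ σ' k S) {xs : Fin m → Fin n}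
    {ys : Fin m → Fin n'} (hxy : ∀ i, (xs i, ys i) ∈ S) : Holds σ φ xs ↔ Holds σ' φ ys := by
  induction φ generalizing k S with
  | falsum => exact Iff.rfl
  | equal t₁ t₂ =>
    obtain ⟨i, rfl⟩ := term_eq_var t₁
    obtain ⟨j, rfl⟩ := term_eq_var t₂
    exact h.isPartialIso.fst_eq_iff (hxy i) (hxy j)
  | rel R ts =>
    cases R
    all_goals
      obtain ⟨i, hi⟩ := term_eq_var (ts 0)
      obtain ⟨j, hj⟩ := term_eq_var (ts 1)
      obtain rfl : ts = ![Term.var (Sum.inr i), Term.var (Sum.inr j)] := by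
        funext r; fin_cases r <;> assumption
      have hij := h.isPartialIso _ (hxy i) _ (hxy j)
    exacts [hij.1, hij.2]
  | imp φ ψ ihφ ihψ =>
    exact imp_congr (ihφ (le_of_max_le_left hφ) h hxy) (ihψ (le_of_max_le_right hφ) h hxy)
  | all φ ih =>
    obtain ⟨k, rfl⟩ : ∃ k', k = k' + 1 := ⟨k - 1, by change qd φ + 1 ≤ k at hφ; omega⟩
    have hφ' : qd φ ≤ k := Nat.le_of_succ_le_succ hφ
    have hsnoc : ∀ x x' i, ((Fin.snoc xs x : Fin _ → Fin n) i, (Fin.snoc ys x' : Fin _ → Fin n') i)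
        ∈ insert (x, x') S := by
      intro x x' i
      refine Fin.lastCases ?_ (fun j => ?_) i
      · simp
      · simpa using Or.inr (hxy j)
    constructor
    · intro hall x'
      obtain ⟨x, hx⟩ := h.2.2 x'
      exact (ih hφ' hx (hsnoc x x')).1 (hall x)
    · intro hall x
      obtain ⟨x', hx⟩ := h.2.1 x
      exact (ih hφ' hx (hsnoc x x')).2 (hall x')

theorem DuplicatorWins.kEquiv {k : ℕ} (h : DuplicatorWins σ σ' k ∅) : kEquiv k ⟨n, σ⟩ ⟨n', σ'⟩ :=
  fun ψ hψ => h.holds_iff ψ hψ finZeroElim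

end Realize

section QuantifierDepth

open FirstOrder.Language

variable {L' : Language} {α : Type*} {m : ℕ}

theorem qd_not (φ : L'.BoundedFormula α m) : qd φ.not = qd φ :=
  max_eq_left (Nat.zero_le _)

theorem qd_inf (φ ψ : L'.BoundedFormula α m) : qd (φ ⊓ ψ) = max (qd φ) (qd ψ) :=
  (qd_not _).trans (congrArg (max _) (qd_not ψ))

theorem qd_sup (φ ψ : L'.BoundedFormula α m) : qd (φ ⊔ ψ) = max (qd φ) (qd ψ) :=
  congrArg (max · _) (qd_not φ)

theorem qd_ex (φ : L'.BoundedFormula α (m + 1)) : qd φ.ex = qd φ + 1 :=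
  (qd_not _).trans (congrArg (· + 1) (qd_not φ))

theorem qd_foldr_le {c : ℕ}
    {op : L'.BoundedFormula α m → L'.BoundedFormula α m → L'.BoundedFormula α m}
    (hop : ∀ φ ψ, qd (op φ ψ) = max (qd φ) (qd ψ)) {e : L'.BoundedFormula α m} (he : qd e = 0)
    {l : List (L'.BoundedFormula α m)} (hl : ∀ φ ∈ l, qd φ ≤ c) : qd (l.foldr op e) ≤ c := by
  induction l with
  | nil => simp [he]
  | cons φ l ih =>
    rw [List.foldr_cons, hop]
    exact max_le (hl φ List.mem_cons_self) (ih fun ψ hψ => hl ψ (List.mem_cons_of_mem _ hψ))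

theorem qd_iInf_le {β : Type*} [Finite β] {c : ℕ} {f : β → L'.BoundedFormula α m}
    (hf : ∀ b, qd (f b) ≤ c) : qd (BoundedFormula.iInf f) ≤ c :=
  qd_foldr_le qd_inf rfl (by simpa using fun b => hf b)

theorem qd_iSup_le {β : Type*} [Finite β] {c : ℕ} {f : β → L'.BoundedFormula α m}
    (hf : ∀ b, qd (f b) ≤ c) : qd (BoundedFormula.iSup f) ≤ c :=
  qd_foldr_le qd_sup rfl (by simpa using fun b => hf b)

end QuantifierDepth

section Hintikka

open FirstOrder.Language

variable {n n' m : ℕ} (σ : Equiv.Perm (Fin n)) {σ' : Equiv.Perm (Fin n')}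

def lit (c : Prop) [Decidable c] (φ : L.BoundedFormula Empty m) : L.BoundedFormula Empty m :=
  if c then φ else φ.not

theorem qd_lit (c : Prop) [Decidable c] (φ : L.BoundedFormula Empty m) : qd (lit c φ) = qd φ := by
  unfold lit
  split_ifs
  exacts [rfl, qd_not φ]

theorem realize_lit {M : Type*} [L.Structure M] (c : Prop) [Decidable c]
    (φ : L.BoundedFormula Empty m) (v : Empty → M) (xs : Fin m → M) :
    (lit c φ).Realize v xs ↔ (c ↔ φ.Realize v xs) := by
  unfold lit
  split_ifs with hc <;> simp [hc]

def atom (R : TwoRel 2) (i j : Fin m) : L.BoundedFormula Empty m :=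
  BoundedFormula.rel (L := L) R ![Term.var (Sum.inr i), Term.var (Sum.inr j)]

noncomputable def atomicType (xs : Fin m → Fin n) : L.BoundedFormula Empty m :=
  BoundedFormula.iInf fun ij : Fin m × Fin m =>
    lit (xs ij.1 < xs ij.2) (atom .lp ij.1 ij.2) ⊓
      lit (σ (xs ij.1) < σ (xs ij.2)) (atom .lv ij.1 ij.2)

theorem qd_atomicType (xs : Fin m → Fin n) : qd (atomicType σ xs) = 0 :=
  Nat.le_zero.1 <| qd_iInf_le fun _ => by rw [qd_inf, qd_lit, qd_lit]; rfl

theorem holds_atomicType (xs : Fin m → Fin n) (ys : Fin m → Fin n') :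
    Holds σ' (atomicType σ xs) ys ↔ IsPartialIso σ σ' (Set.range fun i => (xs i, ys i)) := by
  simp only [Holds, atomicType, BoundedFormula.realize_iInf, BoundedFormula.realize_inf,
    realize_lit, IsPartialIso, Set.forall_mem_range, Prod.forall]
  exact Iff.rfl

noncomputable def hintikka : ℕ → {m : ℕ} → (Fin m → Fin n) → L.BoundedFormula Empty m
  | 0, _, xs => atomicType σ xs
  | k + 1, _, xs => atomicType σ xs ⊓
      ((BoundedFormula.iInf fun x => (hintikka k (Fin.snoc (α := fun _ => Fin n) xs x)).ex) ⊓
        (BoundedFormula.iSup fun x => hintikka k (Fin.snoc (α := fun _ => Fin n) xs x)).all)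

theorem qd_hintikka_le (k : ℕ) (xs : Fin m → Fin n) : qd (hintikka σ k xs) ≤ k := by
  induction k generalizing m with
  | zero => exact (qd_atomicType σ xs).le
  | succ k ih =>
    rw [hintikka, qd_inf, qd_inf, qd_atomicType]
    refine max_le (Nat.zero_le _) (max_le (qd_iInf_le fun x => ?_) ?_)
    · rw [qd_ex]
      exact Nat.succ_le_succ (ih _)
    · exact Nat.succ_le_succ (qd_iSup_le fun x => ih _)

theorem range_snoc_pair {β γ : Type*} (xs : Fin m → β) (ys : Fin m → γ) (x : β) (y : γ) :
    (Set.range fun i => ((Fin.snoc (α := fun _ => β) xs x i), Fin.snoc (α := fun _ => γ) ys y i)) =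
      insert (x, y) (Set.range fun i => (xs i, ys i)) := by
  ext p
  simp [Fin.exists_fin_succ', or_comm, eq_comm]

theorem holds_hintikka (k : ℕ) (xs : Fin m → Fin n) (ys : Fin m → Fin n') :
    Holds σ' (hintikka σ k xs) ys ↔ DuplicatorWins σ σ' k (Set.range fun i => (xs i, ys i)) := by
  induction k generalizing m with
  | zero => exact holds_atomicType σ xs ys
  | succ k ih =>
    have ih' : ∀ x x', Holds σ' (hintikka σ k (Fin.snoc xs x)) (Fin.snoc ys x') ↔
        DuplicatorWins σ σ' k (insert (x, x') (Set.range fun i => (xs i, ys i))) := by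
      intro x x'
      rw [ih, range_snoc_pair]
    let _ := pStruct σ'
    simp only [Holds] at ih' ⊢
    rw [hintikka, BoundedFormula.realize_inf, BoundedFormula.realize_inf,
      BoundedFormula.realize_iInf, BoundedFormula.realize_all]
    simp only [BoundedFormula.realize_ex, BoundedFormula.realize_iSup, ih']
    exact and_congr (holds_atomicType σ xs ys) Iff.rfl

theorem kEquiv_iff_duplicatorWins {k : ℕ} :
    kEquiv k ⟨n, σ⟩ ⟨n', σ'⟩ ↔ DuplicatorWins σ σ' k ∅ := by
  refine ⟨fun h => ?_, DuplicatorWins.kEquiv⟩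
  have hself : Holds σ (hintikka σ k (m := 0) default) default :=
    (holds_hintikka σ k _ _).2 (duplicatorWins_self k (by simp))
  simpa using (holds_hintikka σ k _ _).1 ((h _ (qd_hintikka_le σ k _)).1 hself)

end Hintikka

section Glue

variable {a b a' b' : ℕ}

def gluePerm (σ : Equiv.Perm (Fin a)) (π : Equiv.Perm (Fin b)) : Equiv.Perm (Fin (a + (1 + b))) :=
  dsum σ (ssum 1 π)

theorem glue_mk (σ : Equiv.Perm (Fin a)) (π : Equiv.Perm (Fin b)) :
    glue ⟨a, σ⟩ ⟨b, π⟩ = ⟨a + (1 + b), gluePerm σ π⟩ := rfl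

def glueLeft (x : Fin a) : Fin (a + (1 + b)) := Fin.castAdd (1 + b) x

def glueMid : Fin (a + (1 + b)) := Fin.natAdd a (Fin.castAdd b 0)

def glueRight (y : Fin b) : Fin (a + (1 + b)) := Fin.natAdd a (Fin.natAdd 1 y)

@[simp] theorem glueLeft_val (x : Fin a) : (glueLeft (b := b) x).val = x.val := rfl

@[simp] theorem glueMid_val : (glueMid : Fin (a + (1 + b))).val = a := rfl

@[simp] theorem glueRight_val (y : Fin b) : (glueRight (a := a) y).val = a + (1 + y.val) := rfl

theorem eq_glueLeft_or_glueMid_or_glueRight (p : Fin (a + (1 + b))) :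
    (∃ x, p = glueLeft x) ∨ p = glueMid ∨ ∃ y, p = glueRight y := by
  rcases lt_trichotomy p.val a with h | h | h
  · exact Or.inl ⟨⟨p, h⟩, Fin.ext rfl⟩
  · exact Or.inr (Or.inl (Fin.ext h))
  · exact Or.inr (Or.inr ⟨⟨p - (a + 1), by omega⟩, Fin.ext (by simp; omega)⟩)

variable (σ : Equiv.Perm (Fin a)) (π : Equiv.Perm (Fin b))

@[simp] theorem gluePerm_glueLeft (x : Fin a) : (gluePerm σ π (glueLeft x)).val = σ x := by
  simp [gluePerm, dsum, glueLeft]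

@[simp] theorem gluePerm_glueMid : (gluePerm σ π glueMid).val = a + b := by
  simp [gluePerm, dsum, ssum, glueMid]

@[simp] theorem gluePerm_glueRight (y : Fin b) : (gluePerm σ π (glueRight y)).val = a + π y := by
  simp [gluePerm, dsum, ssum, glueRight]

variable {σ π}

theorem Avoids.gluePerm (hσ : Avoids σ) (hπ : Avoids π) : Avoids (gluePerm σ π) := by
  rintro ⟨i, j, l, hij, hjl, hli, hij'⟩
  simp only [Fin.lt_def] at hij hjl hli hij'
  rcases eq_glueLeft_or_glueMid_or_glueRight i with ⟨i, rfl⟩ | rfl | ⟨i, rfl⟩ <;>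
  rcases eq_glueLeft_or_glueMid_or_glueRight j with ⟨j, rfl⟩ | rfl | ⟨j, rfl⟩ <;>
  rcases eq_glueLeft_or_glueMid_or_glueRight l with ⟨l, rfl⟩ | rfl | ⟨l, rfl⟩ <;>
  simp only [glueLeft_val, glueMid_val, glueRight_val, gluePerm_glueLeft, gluePerm_glueMid,
    gluePerm_glueRight] at hij hjl hli hij' <;>
  first
  | omega
  | exact hσ ⟨i, j, l, hij, hjl, hli, hij'⟩
  | exact hπ ⟨i, j, l, by omega, by omega, by omega, by omega⟩

def glueSet (S₁ : Set (Fin a × Fin a')) (S₂ : Set (Fin b × Fin b')) :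
    Set (Fin (a + (1 + b)) × Fin (a' + (1 + b'))) :=
  insert (glueMid, glueMid) (Prod.map glueLeft glueLeft '' S₁ ∪ Prod.map glueRight glueRight '' S₂)

variable {S₁ : Set (Fin a × Fin a')} {S₂ : Set (Fin b × Fin b')}

theorem insert_glueLeft_glueSet (x : Fin a) (x' : Fin a') :
    insert (glueLeft x, glueLeft x') (glueSet S₁ S₂) = glueSet (insert (x, x') S₁) S₂ := by
  simp only [glueSet, Set.image_insert_eq, Set.insert_union, Prod.map_apply, Set.insert_comm]

theorem insert_glueRight_glueSet (y : Fin b) (y' : Fin b') :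
    insert (glueRight y, glueRight y') (glueSet S₁ S₂) = glueSet S₁ (insert (y, y') S₂) := by
  simp only [glueSet, Set.image_insert_eq, Set.union_insert, Prod.map_apply, Set.insert_comm]

theorem insert_glueMid_glueSet :
    insert (glueMid, glueMid) (glueSet S₁ S₂) = glueSet S₁ S₂ :=
  Set.insert_idem _ _

variable {σ' : Equiv.Perm (Fin a')} {π' : Equiv.Perm (Fin b')}

theorem IsPartialIso.glue (h₁ : IsPartialIso σ σ' S₁) (h₂ : IsPartialIso π π' S₂) :
    IsPartialIso (gluePerm σ π) (gluePerm σ' π') (glueSet S₁ S₂) := by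
  rintro _ (rfl | ⟨⟨x, x'⟩, hx, rfl⟩ | ⟨⟨x, x'⟩, hx, rfl⟩) _
    (rfl | ⟨⟨y, y'⟩, hy, rfl⟩ | ⟨⟨y, y'⟩, hy, rfl⟩)
  all_goals
    simp only [Prod.map_apply, Fin.lt_def, glueLeft_val, glueMid_val, glueRight_val,
      gluePerm_glueLeft, gluePerm_glueMid, gluePerm_glueRight]
  -- across blocks the order is fixed by the blocks; within a block it is that of `h₁` or `h₂`
  all_goals first
    | omega
    | have := h₁ _ hx _ hy; simp only [Fin.lt_def] at this; omega
    | have := h₂ _ hx _ hy; simp only [Fin.lt_def] at this; omega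

theorem DuplicatorWins.glue {k : ℕ} (h₁ : DuplicatorWins σ σ' k S₁)
    (h₂ : DuplicatorWins π π' k S₂) :
    DuplicatorWins (gluePerm σ π) (gluePerm σ' π') k (glueSet S₁ S₂) := by
  induction k generalizing S₁ S₂ with
  | zero => exact IsPartialIso.glue h₁ h₂
  | succ k ih =>
    refine ⟨h₁.isPartialIso.glue h₂.isPartialIso, fun p => ?_, fun p' => ?_⟩
    · rcases eq_glueLeft_or_glueMid_or_glueRight p with ⟨x, rfl⟩ | rfl | ⟨y, rfl⟩
      · obtain ⟨x', hx⟩ := h₁.2.1 x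
        exact ⟨glueLeft x', insert_glueLeft_glueSet x x' ▸ ih hx h₂.of_succ⟩
      · exact ⟨glueMid, by rw [insert_glueMid_glueSet]; exact ih h₁.of_succ h₂.of_succ⟩
      · obtain ⟨y', hy⟩ := h₂.2.1 y
        exact ⟨glueRight y', insert_glueRight_glueSet y y' ▸ ih h₁.of_succ hy⟩
    · rcases eq_glueLeft_or_glueMid_or_glueRight p' with ⟨x', rfl⟩ | rfl | ⟨y', rfl⟩
      · obtain ⟨x, hx⟩ := h₁.2.2 x'
        exact ⟨glueLeft x, insert_glueLeft_glueSet x x' ▸ ih hx h₂.of_succ⟩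
      · exact ⟨glueMid, by rw [insert_glueMid_glueSet]; exact ih h₁.of_succ h₂.of_succ⟩
      · obtain ⟨y, hy⟩ := h₂.2.2 y'
        exact ⟨glueRight y, insert_glueRight_glueSet y y' ▸ ih h₁.of_succ hy⟩

end Glue

theorem kEquiv_glue {k : ℕ} {p p' q q' : FinPerm} (hp : kEquiv k p p') (hq : kEquiv k q q') :
    kEquiv k (glue p q) (glue p' q') := by
  obtain ⟨a, σ⟩ := p
  obtain ⟨a', σ'⟩ := p'
  obtain ⟨b, π⟩ := q
  obtain ⟨b', π'⟩ := q'
  rw [glue_mk, glue_mk, kEquiv_iff_duplicatorWins]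
  rw [kEquiv_iff_duplicatorWins] at hp hq
  exact (hp.glue hq).mono (Set.empty_subset _)

section Counting

variable {k : ℕ}

theorem cnt_ne_zero_iff {t : QT k} {n : ℕ} :
    cnt k t n ≠ 0 ↔ ∃ σ : Equiv.Perm (Fin n), Avoids σ ∧ typeOf k ⟨n, σ⟩ = t := by
  rw [cnt, Nat.card_ne_zero, nonempty_subtype]
  exact and_iff_left inferInstance

theorem Realized.exists_cnt_ne_zero {t : QT k} (h : Realized k t) : ∃ m, cnt k t m ≠ 0 := by
  obtain ⟨⟨m, σ⟩, hσ, rfl⟩ := h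
  exact ⟨m, cnt_ne_zero_iff.2 ⟨σ, hσ, rfl⟩⟩

theorem typeOf_glue (p q : FinPerm) : typeOf k (glue p q) = Hfun k (typeOf k p) (typeOf k q) :=
  Quotient.sound <| kEquiv_glue ((kSetoid k).iseqv.symm (Quotient.mk_out p))
    ((kSetoid k).iseqv.symm (Quotient.mk_out q))

theorem cnt_add_ne_zero {t₁ t₂ t : QT k} (ht : Hfun k t₁ t₂ = t) {n₁ n₂ : ℕ}
    (h₁ : cnt k t₁ n₁ ≠ 0) (h₂ : cnt k t₂ n₂ ≠ 0) : cnt k t (n₁ + (1 + n₂)) ≠ 0 := by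
  obtain ⟨σ, hσ, rfl⟩ := cnt_ne_zero_iff.1 h₁
  obtain ⟨π, hπ, rfl⟩ := cnt_ne_zero_iff.1 h₂
  exact cnt_ne_zero_iff.2 ⟨gluePerm σ π, hσ.gluePerm hπ, (typeOf_glue _ _).trans ht⟩

end Counting

theorem aperiodicity_propagates_general (k : ℕ) (u t : QT k)
    (hap : ¬ SeqPeriodic fun n : ℕ => (cnt k u n : ℝ)) (he : Edge k u t) :
    ¬ SeqPeriodic fun n : ℕ => (cnt k t n : ℝ) := by
  obtain ⟨v, hv, hvt⟩ := he
  obtain ⟨m, hm⟩ := hv.exists_cnt_ne_zero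
  refine fun ht => hap (ht.of_shift (1 + m) fun n hn => ?_)
  rw [Nat.cast_ne_zero] at hn ⊢
  rcases hvt with hvt | hvt
  · exact cnt_add_ne_zero hvt hn hm
  · rw [show n + (1 + m) = m + (1 + n) by omega]
    exact cnt_add_ne_zero hvt hm hn

/-- Aperiodicity propagates along the edges of the dependency graph: if `C_u` is aperiodic
and `u → t` is an edge of `G_k`, then `C_t` is aperiodic. -/
theorem aperiodicity_propagates (k : ℕ) (hk : 2 ≤ k) (u t : QT k)
    (hu : Realized k u) (ht : Realized k t)
    (hap : ¬ SeqPeriodic fun n : ℕ => (cnt k u n : ℝ)) (he : Edge k u t) :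
    ¬ SeqPeriodic fun n : ℕ => (cnt k t n : ℝ) :=
  aperiodicity_propagates_general k u t hap he

end Av231
end

section
/- Let σ_n be a uniform random 231-avoiding permutation of size n, decomposed uniquely as σ_n = τ_n ⊕ (1 ⊖ π_n) with τ_n, π_n ∈ Av(231). Let 𝓕 and 𝓕' be two finite subsets of Av(231), and let E_{𝓕,𝓕'} be the event (τ_n ∈ 𝓕) ∨ (π_n ∈ 𝓕'). Then lim_{n→∞} P(E_{𝓕,𝓕'}) = Σ_{k ≤ K} (|𝓕_k| + |𝓕'_k|) · 4^{-k-1}, where 𝓕_k (resp. 𝓕'_k) is the set of permutations of size k in 𝓕 (resp. 𝓕') and K is the maximal size of a permutation in 𝓕 ∪ 𝓕'. -/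
open FirstOrder Filter Asymptotics Topology

namespace Av231

/-! A 231-avoiding permutation of size `n + 1` splits at the position `A` of its maximum: an
entry left of `A` that exceeded an entry right of `A` would form a `231` with the maximum, so the
left part is a permutation of `{0, …, A - 1}` and `σ = τ ⊕ (1 ⊖ π)`. The map `(τ, π) ↦ τ ⊕ (1 ⊖ π)`
is injective and its image avoids `231` exactly when `τ` and `π` do, whence
`|Av_{n+1}| = Σ_k |Av_k| |Av_{n-k}|` and `|Av_n| = Cat_n`. For `n > 2K + 1` the events `τ ∈ 𝓕` and
`π ∈ 𝓕'` are disjoint, so the event has `Σ_{ρ ∈ 𝓕} Cat_{n-1-|ρ|} + Σ_{ρ ∈ 𝓕'} Cat_{n-1-|ρ|}`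
elements, and `Cat_{n-1-k} / Cat_n → 4^{-k-1}` because `Cat_n / Cat_{n+1} → 1/4`. -/

lemma dsum_castAdd {a b : ℕ} (σ : Equiv.Perm (Fin a)) (τ : Equiv.Perm (Fin b)) (i : Fin a) :
    dsum σ τ (Fin.castAdd b i) = Fin.castAdd b (σ i) := by
  simp [dsum, Equiv.permCongr_apply]

lemma dsum_natAdd {a b : ℕ} (σ : Equiv.Perm (Fin a)) (τ : Equiv.Perm (Fin b)) (j : Fin b) :
    dsum σ τ (Fin.natAdd a j) = Fin.natAdd a (τ j) := by
  simp [dsum, Equiv.permCongr_apply]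

lemma val_ssum_castAdd {a b : ℕ} (σ : Equiv.Perm (Fin a)) (τ : Equiv.Perm (Fin b)) (i : Fin a) :
    (ssum σ τ (Fin.castAdd b i) : ℕ) = b + σ i := by
  simp [ssum]; omega

lemma val_ssum_natAdd {a b : ℕ} (σ : Equiv.Perm (Fin a)) (τ : Equiv.Perm (Fin b)) (j : Fin b) :
    (ssum σ τ (Fin.natAdd a j) : ℕ) = τ j := by
  simp [ssum]

lemma finPerm_eq_iff {p q : FinPerm} :
    p = q ↔ p.1 = q.1 ∧
      ∀ (x : ℕ) (hp : x < p.1) (hq : x < q.1), (p.2 ⟨x, hp⟩ : ℕ) = q.2 ⟨x, hq⟩ := by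
  obtain ⟨m, σ⟩ := p
  obtain ⟨n, τ⟩ := q
  constructor
  · rintro ⟨⟩
    exact ⟨rfl, fun _ _ _ => rfl⟩
  · rintro ⟨rfl, hv⟩
    congr
    ext x
    exact hv x x.2 x.2

section glue

variable (τ π : FinPerm) (x : Fin (glue τ π).1)

lemma glue_apply_of_lt (hx : (x : ℕ) < τ.1) : ((glue τ π).2 x : ℕ) = τ.2 ⟨x, hx⟩ := by
  show (dsum τ.2 (ssum 1 π.2) (Fin.castAdd (1 + π.1) ⟨x, hx⟩) : ℕ) = _
  rw [dsum_castAdd]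
  rfl

lemma glue_apply_of_eq (hx : (x : ℕ) = τ.1) : ((glue τ π).2 x : ℕ) = τ.1 + π.1 := by
  have : x = Fin.natAdd τ.1 (Fin.castAdd π.1 (0 : Fin 1)) := Fin.ext (by simp [hx])
  rw [this]
  show (dsum τ.2 (ssum 1 π.2) (Fin.natAdd τ.1 (Fin.castAdd π.1 (0 : Fin 1))) : ℕ) = _
  simp [dsum_natAdd, val_ssum_castAdd]

lemma glue_apply_of_eq_add (y : Fin π.1) (hx : (x : ℕ) = τ.1 + 1 + y) :
    ((glue τ π).2 x : ℕ) = τ.1 + π.2 y := by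
  have : x = Fin.natAdd τ.1 (Fin.natAdd 1 y) := Fin.ext (by simp [hx]; omega)
  rw [this]
  show (dsum τ.2 (ssum 1 π.2) (Fin.natAdd τ.1 (Fin.natAdd 1 y)) : ℕ) = _
  simp [dsum_natAdd, val_ssum_natAdd]

lemma glue_apply_lt_of_ne (hx : (x : ℕ) ≠ τ.1) : ((glue τ π).2 x : ℕ) < τ.1 + π.1 := by
  rcases lt_or_gt_of_ne hx with hlt | hgt
  · rw [glue_apply_of_lt τ π x hlt]
    have := (τ.2 ⟨x, hlt⟩).2
    omega
  · obtain ⟨y, hy⟩ := Nat.exists_eq_add_of_lt hgt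
    have hyπ : y < π.1 := by have := x.2; simp only [glue] at this; omega
    rw [glue_apply_of_eq_add τ π x ⟨y, hyπ⟩ (by simp only; omega)]
    have := (π.2 ⟨y, hyπ⟩).2
    omega

end glue

lemma glue_injective2 : Function.Injective2 glue := by
  intro τ τ' π π' h
  obtain ⟨hsize, hval⟩ := finPerm_eq_iff.mp h
  simp only [glue] at hsize
  have hτ1 : τ.1 = τ'.1 := by
    by_contra hne
    have hmax := hval τ.1 (by simp only [glue]; omega) (by simp only [glue]; omega)
    rw [glue_apply_of_eq τ π ⟨τ.1, _⟩ rfl] at hmax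
    have := glue_apply_lt_of_ne τ' π' ⟨τ.1, by simp only [glue]; omega⟩ hne
    omega
  refine ⟨finPerm_eq_iff.mpr ⟨hτ1, fun x hx hx' => ?_⟩,
    finPerm_eq_iff.mpr ⟨by omega, fun y hy hy' => ?_⟩⟩
  · have := hval x (by simp only [glue]; omega) (by simp only [glue]; omega)
    rwa [glue_apply_of_lt τ π _ hx, glue_apply_of_lt τ' π' _ hx'] at this
  · have := hval (τ.1 + 1 + y) (by simp only [glue]; omega) (by simp only [glue]; omega)
    rw [glue_apply_of_eq_add τ π _ ⟨y, hy⟩ rfl,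
      glue_apply_of_eq_add τ' π' _ ⟨y, hy'⟩ (by simp [hτ1])] at this
    omega

theorem Avoids.of_strictMono {m n : ℕ} {σ : Equiv.Perm (Fin n)} {τ : Equiv.Perm (Fin m)}
    (hσ : Avoids σ) (e : Fin m → Fin n) (he : StrictMono e)
    (hval : ∀ i j, τ i < τ j → σ (e i) < σ (e j)) : Avoids τ :=
  fun ⟨i, j, k, hij, hjk, hki, hij'⟩ =>
    hσ ⟨e i, e j, e k, he hij, he hjk, hval _ _ hki, hval _ _ hij'⟩

theorem avoidsF_glue_of_avoidsF {τ π : FinPerm} (hτ : AvoidsF τ) (hπ : AvoidsF π) :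
    AvoidsF (glue τ π) := by
  have hn : (glue τ π).1 = τ.1 + (1 + π.1) := rfl
  rintro ⟨i, j, k, hij, hjk, hki, hij'⟩
  simp only [Fin.lt_def] at hij hjk hki hij'
  have hj := j.2
  rcases lt_trichotomy (k : ℕ) τ.1 with hk | hk | hk
  · refine hτ ⟨⟨i, by omega⟩, ⟨j, by omega⟩, ⟨k, hk⟩, hij, hjk, ?_, ?_⟩ <;>
      simp only [Fin.lt_def, ← glue_apply_of_lt τ π] <;> assumption
  · rw [glue_apply_of_eq τ π k hk] at hki
    omega
  · obtain ⟨z, hz⟩ := Nat.exists_eq_add_of_lt hk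
    rw [glue_apply_of_eq_add τ π k ⟨z, by omega⟩ (by simp only; omega)] at hki
    rcases lt_trichotomy (i : ℕ) τ.1 with hi | hi | hi
    · rw [glue_apply_of_lt τ π i hi] at hki
      have := (τ.2 ⟨i, hi⟩).2
      omega
    · rw [glue_apply_of_eq τ π i hi] at hij'
      omega
    · obtain ⟨x, hx⟩ := Nat.exists_eq_add_of_lt hi
      obtain ⟨y, hy⟩ := Nat.exists_eq_add_of_lt (hi.trans hij)
      rw [glue_apply_of_eq_add τ π i ⟨x, by omega⟩ (by simp only; omega)] at hki hij'
      rw [glue_apply_of_eq_add τ π j ⟨y, by omega⟩ (by simp only; omega)] at hij'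
      exact hπ ⟨⟨x, _⟩, ⟨y, _⟩, ⟨z, _⟩, by simp only [Fin.lt_def]; omega,
        by simp only [Fin.lt_def]; omega, by simp only [Fin.lt_def]; omega,
        by simp only [Fin.lt_def]; omega⟩

theorem avoidsF_glue (τ π : FinPerm) : AvoidsF (glue τ π) ↔ AvoidsF τ ∧ AvoidsF π := by
  have hn : (glue τ π).1 = τ.1 + (1 + π.1) := rfl
  refine ⟨fun h => ⟨?_, ?_⟩, fun h => avoidsF_glue_of_avoidsF h.1 h.2⟩
  · refine h.of_strictMono (fun i => ⟨i, by omega⟩) (fun i j hij => hij) fun i j hij => ?_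
    rw [Fin.lt_def, glue_apply_of_lt τ π ⟨i, _⟩ i.2, glue_apply_of_lt τ π ⟨j, _⟩ j.2]
    exact hij
  · refine h.of_strictMono (fun j => ⟨τ.1 + 1 + j, by omega⟩)
      (fun i j hij => by rw [Fin.lt_def] at hij ⊢; simp only; omega) fun i j hij => ?_
    rw [Fin.lt_def, glue_apply_of_eq_add τ π ⟨_, _⟩ i rfl, glue_apply_of_eq_add τ π ⟨_, _⟩ j rfl]
    rw [Fin.lt_def] at hij
    omega

lemma exists_perm_val_eq {m : ℕ} (f : Fin m → ℕ) (hf : ∀ i, f i < m)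
    (hinj : Function.Injective f) : ∃ t : Equiv.Perm (Fin m), ∀ i, (t i : ℕ) = f i := by
  have hg : Function.Injective fun i => (⟨f i, hf i⟩ : Fin m) :=
    fun i j h => hinj (congrArg Fin.val h)
  exact ⟨Equiv.ofBijective _ (Finite.injective_iff_bijective.mp hg), fun _ => rfl⟩

namespace Avoids

variable {n : ℕ} {σ : Equiv.Perm (Fin (n + 1))}

lemma apply_lt_apply_of_lt_symm_last_lt (hσ : Avoids σ) {i k : Fin (n + 1)}
    (hi : i < σ.symm (Fin.last n)) (hk : σ.symm (Fin.last n) < k) : σ i < σ k := by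
  have hik : σ i ≠ σ k := σ.injective.ne (hi.trans hk).ne
  have hilast : σ i < Fin.last n :=
    lt_of_le_of_ne (Fin.le_last _) fun h => hi.ne (σ.eq_symm_apply.mpr h)
  refine lt_of_le_of_ne (not_lt.mp fun hki => hσ ⟨i, _, k, hi, hk, hki, ?_⟩) hik
  rwa [σ.apply_symm_apply]

lemma apply_lt_symm_last (hσ : Avoids σ) {i : Fin (n + 1)} (hi : i < σ.symm (Fin.last n)) :
    (σ i : ℕ) < σ.symm (Fin.last n) := by
  have hilast : σ i ≠ Fin.last n := fun h => hi.ne (σ.eq_symm_apply.mpr h)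
  -- the `n - A` entries right of the maximum (at `A`) take distinct values in `(σ i, n)`
  have hcard : (Finset.Ioi (σ.symm (Fin.last n))).card ≤ (Finset.Ioo (σ i) (Fin.last n)).card := by
    refine Finset.card_le_card_of_injOn σ (fun k hk => ?_) σ.injective.injOn
    simp only [Finset.coe_Ioi, Finset.coe_Ioo, Set.mem_Ioi, Set.mem_Ioo] at hk ⊢
    exact ⟨hσ.apply_lt_apply_of_lt_symm_last_lt hi hk, lt_of_le_of_ne (Fin.le_last _)
      fun h => hk.ne' (σ.eq_symm_apply.mpr h)⟩
  rw [Fin.card_Ioi, Fin.card_Ioo, Fin.val_last] at hcard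
  have := Fin.val_lt_last hilast
  omega

lemma symm_last_le_apply (hσ : Avoids σ) {k : Fin (n + 1)} (hk : σ.symm (Fin.last n) < k) :
    (σ.symm (Fin.last n) : ℕ) ≤ σ k := by
  have hcard : (Finset.Iio (σ.symm (Fin.last n))).card ≤ (Finset.Iio (σ k)).card := by
    refine Finset.card_le_card_of_injOn σ (fun i hi => ?_) σ.injective.injOn
    simp only [Finset.coe_Iio, Set.mem_Iio] at hi ⊢
    exact hσ.apply_lt_apply_of_lt_symm_last_lt hi hk
  rwa [Fin.card_Iio, Fin.card_Iio] at hcard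

lemma exists_eq_glue (hσ : Avoids σ) : ∃ τ π : FinPerm, (⟨n + 1, σ⟩ : FinPerm) = glue τ π := by
  set A := σ.symm (Fin.last n)
  have hA : σ A = Fin.last n := σ.apply_symm_apply _
  have hlast {x : Fin (n + 1)} (hx : x ≠ A) : (σ x : ℕ) < n :=
    Fin.val_lt_last fun h => hx (σ.eq_symm_apply.mpr h)
  obtain ⟨t, ht⟩ := exists_perm_val_eq (m := A) (fun i => σ ⟨i, by omega⟩)
    (fun i => hσ.apply_lt_symm_last (Fin.lt_def.mpr i.2))
    fun i j h => Fin.ext (by simpa using σ.injective (Fin.ext h))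
  have hright (y : Fin (n - A)) : A < (⟨A + 1 + y, by omega⟩ : Fin (n + 1)) := by
    simp [Fin.lt_def]; omega
  obtain ⟨p, hp⟩ := exists_perm_val_eq (m := n - A) (fun y => σ ⟨A + 1 + y, by omega⟩ - A)
    (fun y => by have := hlast (hright y).ne'; have := hσ.symm_last_le_apply (hright y); omega)
    fun x y h => by
      have hx := hσ.symm_last_le_apply (hright x)
      have hy := hσ.symm_last_le_apply (hright y)
      have hxy : (⟨A + 1 + x, _⟩ : Fin (n + 1)) = ⟨A + 1 + y, _⟩ :=
        σ.injective (Fin.ext (by simp only at h; omega))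
      ext
      simp only [Fin.mk.injEq] at hxy
      omega
  refine ⟨⟨A, t⟩, ⟨n - A, p⟩, finPerm_eq_iff.mpr ⟨by simp only [glue]; omega, fun x hx hx' => ?_⟩⟩
  rcases lt_trichotomy x A with hxA | hxA | hxA
  · rw [glue_apply_of_lt ⟨A, t⟩ ⟨n - A, p⟩ ⟨x, hx'⟩ hxA, ht]
  · rw [glue_apply_of_eq ⟨A, t⟩ ⟨n - A, p⟩ ⟨x, hx'⟩ hxA]
    have : (⟨x, hx⟩ : Fin (n + 1)) = A := Fin.ext hxA
    simp only [this, hA, Fin.val_last]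
    omega
  · obtain ⟨y, rfl⟩ := Nat.exists_eq_add_of_lt hxA
    have hxn : A + y + 1 < n + 1 := hx
    rw [glue_apply_of_eq_add ⟨A, t⟩ ⟨n - A, p⟩ ⟨_, hx'⟩ ⟨y, show y < n - A by omega⟩
      (by simp only; omega), hp]
    have := hσ.symm_last_le_apply (hright ⟨y, by omega⟩)
    simp only [show A + y + 1 = A + 1 + y by omega] at this ⊢
    omega

end Avoids

open Classical in
noncomputable def avoiding (n : ℕ) : Finset FinPerm :=
  (Finset.univ.filter fun σ : Equiv.Perm (Fin n) => Avoids σ).map (Function.Embedding.sigmaMk n)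

lemma mem_avoiding {n : ℕ} {ρ : FinPerm} : ρ ∈ avoiding n ↔ ρ.1 = n ∧ AvoidsF ρ := by
  obtain ⟨m, σ⟩ := ρ
  constructor
  · simp only [avoiding, Finset.mem_map, Finset.mem_filter, Finset.mem_univ, true_and,
      Function.Embedding.sigmaMk_apply]
    rintro ⟨σ', hσ', h⟩
    cases h
    exact ⟨rfl, hσ'⟩
  · rintro ⟨rfl, hσ⟩
    simpa [avoiding, AvoidsF] using hσ

noncomputable def avoidingPairs (n : ℕ) : Finset (FinPerm × FinPerm) :=
  (Finset.range n).biUnion fun k => avoiding k ×ˢ avoiding (n - 1 - k)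

lemma mem_avoidingPairs {n : ℕ} {x : FinPerm × FinPerm} :
    x ∈ avoidingPairs n ↔ x.1.1 + (1 + x.2.1) = n ∧ AvoidsF x.1 ∧ AvoidsF x.2 := by
  simp only [avoidingPairs, Finset.mem_biUnion, Finset.mem_range, Finset.mem_product, mem_avoiding]
  constructor
  · rintro ⟨k, hk, ⟨rfl, h₁⟩, h₂, h₂'⟩
    exact ⟨by omega, h₁, h₂'⟩
  · rintro ⟨hn, h₁, h₂⟩
    exact ⟨x.1.1, by omega, ⟨rfl, h₁⟩, by omega, h₂⟩

lemma card_avoidingPairs (n : ℕ) :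
    (avoidingPairs n).card =
      ∑ k ∈ Finset.range n, (avoiding k).card * (avoiding (n - 1 - k)).card := by
  rw [avoidingPairs, Finset.card_biUnion]
  · simp only [Finset.card_product]
  · intro k _ l _ hkl
    refine Finset.disjoint_left.mpr fun x hk hl => hkl ?_
    rw [Finset.mem_product, mem_avoiding] at hk hl
    exact hk.1.1.symm.trans hl.1.1

lemma card_perm_subtype_eq {n : ℕ} (Q : FinPerm → Prop) (S : Finset FinPerm)
    (hS : ∀ ρ, ρ ∈ S ↔ ρ.1 = n ∧ Q ρ) :
    Nat.card {σ : Equiv.Perm (Fin n) // Q ⟨n, σ⟩} = S.card := by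
  rw [← Nat.card_eq_finsetCard]
  refine Nat.card_eq_of_bijective (fun σ => ⟨⟨n, σ.1⟩, (hS _).mpr ⟨rfl, σ.2⟩⟩) ⟨?_, ?_⟩
  · intro σ σ' h
    exact Subtype.ext (eq_of_heq (Sigma.mk.inj_iff.mp (congrArg Subtype.val h)).2)
  · rintro ⟨⟨m, σ⟩, hσ⟩
    obtain ⟨rfl, hQ⟩ := (hS _).mp hσ
    exact ⟨⟨σ, hQ⟩, rfl⟩

lemma card_avoids_exists_glue_eq (n : ℕ) (P : FinPerm × FinPerm → Prop) [DecidablePred P] :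
    Nat.card {σ : Equiv.Perm (Fin n) //
        Avoids σ ∧ ∃ τ π : FinPerm, (⟨n, σ⟩ : FinPerm) = glue τ π ∧ P (τ, π)} =
      ((avoidingPairs n).filter P).card := by
  rw [← Finset.card_image_of_injective _ glue_injective2.uncurry]
  refine card_perm_subtype_eq (fun ρ => AvoidsF ρ ∧ ∃ τ π, ρ = glue τ π ∧ P (τ, π)) _ fun ρ => ?_
  simp only [Finset.mem_image, Finset.mem_filter, mem_avoidingPairs, Prod.exists,
    Function.uncurry_apply_pair]
  constructor
  · rintro ⟨τ, π, ⟨⟨hn, hτ, hπ⟩, hP⟩, rfl⟩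
    exact ⟨hn, (avoidsF_glue τ π).mpr ⟨hτ, hπ⟩, τ, π, rfl, hP⟩
  · rintro ⟨hn, hρ, τ, π, rfl, hP⟩
    exact ⟨τ, π, ⟨⟨hn, (avoidsF_glue τ π).mp hρ⟩, hP⟩, rfl⟩

lemma card_avoiding_succ (n : ℕ) : (avoiding (n + 1)).card = (avoidingPairs (n + 1)).card := by
  rw [← card_perm_subtype_eq AvoidsF _ fun _ => mem_avoiding,
    ← Finset.filter_true (avoidingPairs _), ← card_avoids_exists_glue_eq]
  exact Nat.card_congr <| Equiv.subtypeEquivRight fun σ =>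
    ⟨fun h => ⟨h, (Avoids.exists_eq_glue h).imp fun _ => .imp fun _ h => ⟨h, trivial⟩⟩, And.left⟩

theorem card_avoiding (n : ℕ) : (avoiding n).card = catalan n := by
  induction n using Nat.strong_induction_on with
  | _ n ih =>
    rcases n with _ | n
    · have : avoiding 0 = {⟨0, 1⟩} := by
        ext ⟨m, σ⟩
        simp only [mem_avoiding, Finset.mem_singleton]
        constructor
        · rintro ⟨rfl, -⟩
          rw [Subsingleton.elim σ 1]
        · rintro ⟨⟩
          exact ⟨rfl, fun ⟨i, _⟩ => i.elim0⟩
      rw [this, Finset.card_singleton, catalan_zero]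
    · rw [card_avoiding_succ, card_avoidingPairs, catalan_succ, ← Fin.sum_univ_eq_sum_range]
      refine Finset.sum_congr rfl fun k _ => ?_
      rw [ih k (by omega), ih (n + 1 - 1 - k) (by omega), Nat.add_sub_cancel]

lemma card_filter_fst_mem_avoidingPairs {n : ℕ} (F : Finset FinPerm) (hF : ∀ ρ ∈ F, AvoidsF ρ)
    (hn : ∀ ρ ∈ F, ρ.1 < n) :
    ((avoidingPairs n).filter (·.1 ∈ F)).card = ∑ ρ ∈ F, catalan (n - 1 - ρ.1) := by
  rw [Finset.card_eq_sum_card_fiberwise (f := Prod.fst)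
    (s := (avoidingPairs n).filter (·.1 ∈ F)) (t := F)
    fun x hx => (Finset.mem_filter.mp (Finset.mem_coe.mp hx)).2]
  refine Finset.sum_congr rfl fun ρ hρ => ?_
  have : ((avoidingPairs n).filter (·.1 ∈ F)).filter (·.1 = ρ) = {ρ} ×ˢ avoiding (n - 1 - ρ.1) := by
    ext ⟨τ, π⟩
    simp only [Finset.mem_filter, mem_avoidingPairs, Finset.mem_product, Finset.mem_singleton,
      mem_avoiding]
    constructor
    · rintro ⟨⟨⟨hsize, -, hπ⟩, -⟩, rfl⟩
      exact ⟨rfl, by omega, hπ⟩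
    · rintro ⟨rfl, hsize, hπ⟩
      exact ⟨⟨⟨by have := hn τ hρ; omega, hF τ hρ, hπ⟩, hρ⟩, rfl⟩
  rw [this, Finset.card_product, Finset.card_singleton, one_mul, card_avoiding]

lemma card_filter_snd_mem_avoidingPairs {n : ℕ} (F : Finset FinPerm) (hF : ∀ ρ ∈ F, AvoidsF ρ)
    (hn : ∀ ρ ∈ F, ρ.1 < n) :
    ((avoidingPairs n).filter (·.2 ∈ F)).card = ∑ ρ ∈ F, catalan (n - 1 - ρ.1) := by
  rw [← card_filter_fst_mem_avoidingPairs F hF hn]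
  refine Finset.card_nbij' Prod.swap Prod.swap ?_ ?_ (fun _ _ => rfl) (fun _ _ => rfl) <;>
  · rintro ⟨τ, π⟩
    simp only [Finset.coe_filter, Set.mem_ofPred_eq, mem_avoidingPairs, Prod.swap_prod_mk]
    rintro ⟨⟨hsize, hτ, hπ⟩, hmem⟩
    exact ⟨⟨by omega, hπ, hτ⟩, hmem⟩

lemma card_filter_fst_mem_or_snd_mem_avoidingPairs {n K : ℕ} (F F' : Finset FinPerm)
    (hF : ∀ ρ ∈ F, AvoidsF ρ) (hF' : ∀ ρ ∈ F', AvoidsF ρ)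
    (hK : ∀ ρ ∈ F, ρ.1 ≤ K) (hK' : ∀ ρ ∈ F', ρ.1 ≤ K) (hn : 2 * K + 1 < n) :
    ((avoidingPairs n).filter fun x => x.1 ∈ F ∨ x.2 ∈ F').card =
      ∑ ρ ∈ F, catalan (n - 1 - ρ.1) + ∑ ρ ∈ F', catalan (n - 1 - ρ.1) := by
  rw [Finset.filter_or, Finset.card_union_of_disjoint,
    card_filter_fst_mem_avoidingPairs F hF fun ρ hρ => by have := hK ρ hρ; omega,
    card_filter_snd_mem_avoidingPairs F' hF' fun ρ hρ => by have := hK' ρ hρ; omega]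
  refine Finset.disjoint_left.mpr fun x hx hx' => ?_
  rw [Finset.mem_filter, mem_avoidingPairs] at hx hx'
  have := hK _ hx.2
  have := hK' _ hx'.2
  omega

lemma catalan_pos (n : ℕ) : 0 < catalan n :=
  Nat.pos_of_mul_pos_left ((succ_mul_catalan_eq_centralBinom n).symm ▸ Nat.centralBinom_pos n)

-- The right-hand side has the shape of `tendsto_add_mul_div_add_mul_atTop_nhds`.
lemma catalan_div_catalan_succ (n : ℕ) :
    (catalan n : ℝ) / catalan (n + 1) = (2 + 1 * n) / (2 + 4 * n) := by
  have hc : (n + 2) * catalan (n + 1) = 2 * (2 * n + 1) * catalan n := by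
    refine Nat.eq_of_mul_eq_mul_left n.succ_pos ?_
    calc (n + 1) * ((n + 2) * catalan (n + 1)) = (n + 1) * (n + 1).centralBinom := by
          rw [← succ_mul_catalan_eq_centralBinom]
      _ = 2 * (2 * n + 1) * n.centralBinom := Nat.succ_mul_centralBinom_succ n
      _ = (n + 1) * (2 * (2 * n + 1) * catalan n) := by
          rw [← succ_mul_catalan_eq_centralBinom]
          ring
  have hpos : (0 : ℝ) < catalan (n + 1) := by exact_mod_cast catalan_pos (n + 1)
  rw [div_eq_div_iff hpos.ne' (by positivity)]
  have := congrArg (fun m : ℕ => (m : ℝ)) hc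
  push_cast at this
  linarith

lemma tendsto_catalan_div_catalan_add (m : ℕ) :
    Tendsto (fun n : ℕ => (catalan n : ℝ) / catalan (n + m)) atTop (𝓝 (4⁻¹ ^ m)) := by
  induction m with
  | zero =>
    refine tendsto_const_nhds.congr fun n => ?_
    rw [pow_zero, Nat.add_zero, div_self (by exact_mod_cast (catalan_pos n).ne')]
  | succ m ih =>
    have hstep : Tendsto (fun n : ℕ => (catalan (n + m) : ℝ) / catalan (n + m + 1)) atTop
        (𝓝 4⁻¹) := by
      have := (tendsto_add_mul_div_add_mul_atTop_nhds (2 : ℝ) 2 1 four_ne_zero).comp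
        (tendsto_add_atTop_nat m)
      rw [one_div] at this
      exact this.congr fun n => (catalan_div_catalan_succ (n + m)).symm
    refine (ih.mul hstep).congr fun n => ?_
    have hc : (catalan (n + m) : ℝ) ≠ 0 := by exact_mod_cast (catalan_pos _).ne'
    simp only [← add_assoc]
    field_simp

lemma tendsto_catalan_sub_div_catalan (k : ℕ) :
    Tendsto (fun n : ℕ => (catalan (n - 1 - k) : ℝ) / catalan n) atTop (𝓝 (4⁻¹ ^ (k + 1))) := by
  refine ((tendsto_catalan_div_catalan_add (k + 1)).comp (tendsto_sub_atTop_nat (k + 1))).congr' ?_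
  filter_upwards [eventually_ge_atTop (k + 1)] with n hn
  simp only [Function.comp, Nat.sub_add_cancel hn, Nat.sub_sub, Nat.add_comm 1 k]

lemma sum_comp_eq_sum_range_card_mul {ι : Type*} (F : Finset ι) (s : ι → ℕ) {K : ℕ}
    (hK : ∀ i ∈ F, s i ≤ K) (g : ℕ → ℝ) :
    ∑ i ∈ F, g (s i) = ∑ k ∈ Finset.range (K + 1), (Nat.card {i // i ∈ F ∧ s i = k} : ℝ) * g k := by
  rw [← Finset.sum_fiberwise_of_maps_to (t := Finset.range (K + 1)) (g := s)
    fun i hi => Finset.mem_range.mpr (Nat.lt_succ_of_le (hK i hi))]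
  refine Finset.sum_congr rfl fun k _ => ?_
  rw [Finset.sum_congr rfl fun i hi => congrArg g (Finset.mem_filter.mp hi).2, Finset.sum_const,
    nsmul_eq_mul, ← Nat.card_eq_finsetCard,
    Nat.card_congr (Equiv.subtypeEquivRight fun i => Finset.mem_filter)]

/-- Decompose a uniform random 231-avoiding permutation of size `n` as `σ = τ ⊕ (1 ⊖ π)`.
For finite sets `𝓕, 𝓕'` of 231-avoiding permutations, all of size at most `K`, the
probability of the event `(τ ∈ 𝓕) ∨ (π ∈ 𝓕')` converges to
`Σ_{k ≤ K} (|𝓕_k| + |𝓕'_k|) 4^{-k-1}`, where `𝓕_k` is the set of elements of `𝓕` of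
size `k`. -/
theorem event_probability_limit (F F' : Finset FinPerm)
    (hF : ∀ ρ ∈ F, AvoidsF ρ) (hF' : ∀ ρ ∈ F', AvoidsF ρ)
    (K : ℕ) (hK : ∀ ρ ∈ F, ρ.1 ≤ K) (hK' : ∀ ρ ∈ F', ρ.1 ≤ K) :
    Tendsto (fun n : ℕ => (Nat.card {σ : Equiv.Perm (Fin n) //
          Avoids σ ∧ ∃ τ π : FinPerm,
            (⟨n, σ⟩ : FinPerm) = glue τ π ∧ (τ ∈ F ∨ π ∈ F')} : ℝ) / (catalan n : ℝ))
      atTop (𝓝 (∑ k ∈ Finset.range (K + 1),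
        ((Nat.card {ρ : FinPerm // ρ ∈ F ∧ ρ.1 = k} : ℝ) +
          (Nat.card {ρ : FinPerm // ρ ∈ F' ∧ ρ.1 = k} : ℝ)) * (4 : ℝ) ^ (-(k : ℤ) - 1))) := by
  have hpow (k : ℕ) : (4 : ℝ) ^ (-(k : ℤ) - 1) = 4⁻¹ ^ (k + 1) := by
    rw [inv_pow, ← zpow_natCast, ← zpow_neg]
    push_cast
    ring_nf
  have hlim := (tendsto_finsetSum F fun ρ _ => tendsto_catalan_sub_div_catalan ρ.1).add
    (tendsto_finsetSum F' fun ρ _ => tendsto_catalan_sub_div_catalan ρ.1)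
  simp only [hpow, add_mul, Finset.sum_add_distrib,
    ← sum_comp_eq_sum_range_card_mul F _ hK, ← sum_comp_eq_sum_range_card_mul F' _ hK']
  refine hlim.congr' ?_
  filter_upwards [eventually_gt_atTop (2 * K + 1)] with n hn
  rw [card_avoids_exists_glue_eq n fun x => x.1 ∈ F ∨ x.2 ∈ F',
    card_filter_fst_mem_or_snd_mem_avoidingPairs F F' hF hF' hK hK' hn]
  push_cast
  rw [add_div, Finset.sum_div, Finset.sum_div]

end Av231
end
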